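/- If a weight F : A^op → Set is Φ-flat (weighted colimits by F commute in Set with all limits whose weights lie in a class Φ) and G : A → B is any functor between small categories, then the left Kan extension Lan_G F : B^op → Set is also Φ-flat. -/

import Mathlib

open CategoryTheory Limits

universe u

/-- A weight for limits: a small category together with a `Type`-valued functor on it. -/
structure LimitWeight : Type (u + 1) where
  shape : Type u
  [cat : SmallCategory shape]
  w : shape ⥤ Type u

attribute [instance] LimitWeight.cat

/-- A functor `F` preserves `W`-weighted limits, where the `W`-weighted limit of
`T : W.shape ⥤ C` is the conical limit of `T` precomposed with the projection from the
category of elements of the weight `W.w`. -/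
def PreservesWeightedLimits (W : LimitWeight.{u}) {C : Type*} [Category C]
    {E : Type*} [Category E] (F : C ⥤ E) : Prop :=
  ∀ T : W.shape ⥤ C, Nonempty (PreservesLimit (CategoryOfElements.π W.w ⋙ T) F)

/-- The functor `F ⋆ (−) : [A, Type] ⥤ Type` computing `F`-weighted colimits, realized as
the colimit over the (opposite of the) category of elements of `F`. -/
noncomputable def weightedColimFunctor {A : Type u} [SmallCategory A] (F : Aᵒᵖ ⥤ Type u) :
    (A ⥤ Type u) ⥤ Type u :=
  (Functor.whiskeringLeft F.Elementsᵒᵖ A (Type u)).obj (CategoryOfElements.π F).leftOp ⋙ colim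

/-- A weight `F : Aᵒᵖ ⥤ Type` is `Φ`-flat if the functor `F ⋆ (−)` computing `F`-weighted
colimits preserves all `Φ`-weighted limits. -/
def IsPhiFlat (Φ : Set LimitWeight.{u}) {A : Type u} [SmallCategory A]
    (F : Aᵒᵖ ⥤ Type u) : Prop :=
  ∀ W ∈ Φ, PreservesWeightedLimits W (weightedColimFunctor F)

/-! The functor `F.Elements ⥤ (Lan_G F).Elements`, `(a, x) ↦ (G a, η x)`, is initial: its comma
category over `(b, y)` is the fibre over `y` of the elements of the colimit diagram computing
`(Lan_G F)(b)`, and such a fibre is connected because elements of a colimit of types are identified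
exactly along zigzags. Hence `Lan_G F ⋆ H ≅ F ⋆ (H ∘ G)` naturally in `H`, and `F ⋆ (− ∘ G)`
preserves `Φ`-weighted limits since restriction along `G` preserves all limits. -/

open CategoryTheory.Functor

universe w

namespace CategoryTheory

section ElementsOver

variable {J : Type*} [Category J] {D : J ⥤ Type w}

abbrev Limits.Cocone.elementsOver (c : Cocone D) (y : c.pt) : ObjectProperty D.Elements :=
  fun p ↦ c.ι.app p.1 p.2 = y

variable {c : Cocone D} (hc : IsColimit c)
include hc

lemma Limits.Types.eqvGen_colimitTypeRel_of_isColimit {j j' : J} {x : D.obj j}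
    {x' : D.obj j'} (h : c.ι.app j x = c.ι.app j' x') :
    Relation.EqvGen D.ColimitTypeRel ⟨j, x⟩ ⟨j', x'⟩ :=
  (D.ιColimitType_eq_iff x x').1
    (((Types.isColimit_iff_coconeTypesIsColimit c).1 ⟨hc⟩).bijective.injective h)

lemma Limits.Types.isConnected_elementsOver_of_isColimit (y : c.pt) :
    IsConnected (c.elementsOver y).FullSubcategory := by
  obtain ⟨j, x, hx⟩ := Types.jointly_surjective_of_isColimit hc y
  have : Nonempty (c.elementsOver y).FullSubcategory := ⟨⟨⟨j, x⟩, hx⟩⟩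
  -- the image in `c.pt` is carried along, so that the zigzag stays inside the fibre
  have zigzag : ∀ p q : Σ j, D.obj j, Relation.EqvGen D.ColimitTypeRel p q →
      c.ι.app p.1 p.2 = c.ι.app q.1 q.2 ∧
        ∀ (hp : c.ι.app p.1 p.2 = y) (hq : c.ι.app q.1 q.2 = y),
          Zigzag (⟨⟨p.1, p.2⟩, hp⟩ : (c.elementsOver y).FullSubcategory) ⟨⟨q.1, q.2⟩, hq⟩ := by
    intro p q h
    induction h with
    | rel p q h =>
      obtain ⟨f, hf⟩ := h
      exact ⟨by rw [hf, c.w_apply], fun _ _ ↦ Zigzag.of_hom (ObjectProperty.homMk ⟨f, hf.symm⟩)⟩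
    | refl p => exact ⟨rfl, fun _ _ ↦ Relation.ReflTransGen.refl⟩
    | symm p q _ ih => exact ⟨ih.1.symm, fun hp hq ↦ (ih.2 hq hp).symm⟩
    | trans p r q _ _ ih₁ ih₂ =>
      exact ⟨ih₁.1.trans ih₂.1, fun hp hq ↦ (ih₁.2 hp (ih₁.1 ▸ hp)).trans (ih₂.2 _ hq)⟩
  refine zigzag_isConnected fun ⟨⟨j₁, x₁⟩, h₁⟩ ⟨⟨j₂, x₂⟩, h₂⟩ ↦ ?_
  exact (zigzag ⟨j₁, x₁⟩ ⟨j₂, x₂⟩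
    (Types.eqvGen_colimitTypeRel_of_isColimit hc (h₁.trans h₂.symm))).2 h₁ h₂

end ElementsOver

namespace CategoryOfElements

variable {C D : Type*} [Category C] [Category D] {Φ : C ⥤ D} {F : C ⥤ Type w} {E : D ⥤ Type w}
  (α : F ⟶ Φ ⋙ E)

def costructuredArrowMapPrecompEquivalence (d : E.Elements) :
    CostructuredArrow (map α ⋙ Elements.precomp Φ E) d ≌
      (((LeftExtension.mk E α).coconeAt d.1).elementsOver d.2).FullSubcategory :=
  Equivalence.mk
    { obj o := ⟨⟨CostructuredArrow.mk o.hom.val, o.left.2⟩, o.hom.2⟩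
      map g := ObjectProperty.homMk ⟨CostructuredArrow.homMk g.left.val
        (congrArg Subtype.val (CostructuredArrow.w g)), g.left.2⟩ }
    { obj p := CostructuredArrow.mk (Y := F.elementsMk p.obj.1.left p.obj.2)
        (homMk _ d p.obj.1.hom p.property)
      map f := CostructuredArrow.homMk (homMk _ _ f.hom.val.left f.hom.2)
        (by ext; exact CostructuredArrow.w f.hom.val) }
    (NatIso.ofComponents CostructuredArrow.eta fun _ ↦ by
      ext; exact (Category.comp_id _).trans (Category.id_comp _).symm)
    (NatIso.ofComponents (fun p ↦ ObjectProperty.isoMk _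
      (isoMk _ _ (CostructuredArrow.eta p.obj.1).symm (F.map_id_apply _ p.obj.2))) fun _ ↦ by
      ext; exact (Category.comp_id _).trans (Category.id_comp _).symm)

lemma initial_map_comp_precomp_of_isPointwiseLeftKanExtension
    (hα : (LeftExtension.mk E α).IsPointwiseLeftKanExtension) :
    (map α ⋙ Elements.precomp Φ E).Initial where
  out d :=
    have := Types.isConnected_elementsOver_of_isColimit (hα d.1) d.2
    isConnected_of_equivalent (costructuredArrowMapPrecompEquivalence α d).symm

end CategoryOfElements

end CategoryTheory

noncomputable def weightedColimFunctorIsoOfInitial {A B : Type u} [SmallCategory A]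
    [SmallCategory B] {F : Aᵒᵖ ⥤ Type u} {G : A ⥤ B} {E : Bᵒᵖ ⥤ Type u} (α : F ⟶ G.op ⋙ E)
    [(CategoryOfElements.map α ⋙ Elements.precomp G.op E).Initial] :
    weightedColimFunctor E ≅ (whiskeringLeft A B (Type u)).obj G ⋙ weightedColimFunctor F :=
  -- `(map α ⋙ Elements.precomp G.op E).op ⋙ (π E).leftOp` is `(π F).leftOp ⋙ G` definitionally
  isoWhiskerLeft _ (Final.colimIso (CategoryOfElements.map α ⋙ Elements.precomp G.op E).op).symm

namespace PreservesWeightedLimits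

variable {W : LimitWeight.{u}} {C D E : Type*} [Category C] [Category D] [Category E]

lemma of_iso {K K' : C ⥤ E} (h : PreservesWeightedLimits W K) (e : K ≅ K') :
    PreservesWeightedLimits W K' := fun T ↦
  have := (h T).some
  ⟨preservesLimit_of_natIso _ e⟩

lemma comp_left {K : C ⥤ E} (h : PreservesWeightedLimits W K) (L : D ⥤ C)
    [PreservesLimitsOfSize.{u, u} L] : PreservesWeightedLimits W (L ⋙ K) := fun T ↦
  have : PreservesLimit ((CategoryOfElements.π W.w ⋙ T) ⋙ L) K := (h (T ⋙ L)).some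
  ⟨inferInstance⟩

end PreservesWeightedLimits

/-- If `F : Aᵒᵖ ⥤ Type` is `Φ`-flat and `G : A ⥤ B` is any functor between small
categories, then the left Kan extension of `F` along `G` is `Φ`-flat. -/
theorem stmt10 (Φ : Set LimitWeight.{u}) {A B : Type u} [SmallCategory A] [SmallCategory B]
    (F : Aᵒᵖ ⥤ Type u) (G : A ⥤ B) (hF : IsPhiFlat Φ F) :
    IsPhiFlat Φ (G.op.leftKanExtension F) := by
  intro W hW
  have hη := isPointwiseLeftKanExtensionOfIsLeftKanExtension _ (G.op.leftKanExtensionUnit F)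
  have := CategoryOfElements.initial_map_comp_precomp_of_isPointwiseLeftKanExtension _ hη
  exact ((hF W hW).comp_left ((whiskeringLeft A B (Type u)).obj G)).of_iso
    (weightedColimFunctorIsoOfInitial (G.op.leftKanExtensionUnit F)).symm
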